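/- Assume additionally R > 8. Then for every integer k ≥ 2, |C_k| ≥ R_k^{n_{k−1}}/2^k ≥ 8·R_k; and for k = 1, |C₁| = R₁^{n₁}/2 ≥ 8·R₁. -/

import Mathlib

open Complex

noncomputable section

/-- `f₀(z) = z² + c` iterated `N` times. -/
def f0iter (c : ℂ) (N : ℕ) (z : ℂ) : ℂ := (fun w => w ^ 2 + c)^[N] z

/-- `n_k = 2^(N + k - 1)`. -/
def nseq (N k : ℕ) : ℕ := 2 ^ (N + k - 1)

/-- The radii `R_k`: `R₁ = 2R`, `R_{k+1} = max {|f_k(z)| : |z| = 2 R_k}` where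
`f_k(z) = f₀^N(z) · ∏_{j=1}^k (1 - (1/2)(z/R_j)^{n_j})`. -/
def Rseq (c : ℂ) (N : ℕ) (R : ℝ) : ℕ → ℝ
  | 0 => R
  | 1 => 2 * R
  | k + 2 =>
      sSup ((fun z => ‖f0iter c N z *
        ∏ j ∈ (Finset.Icc 1 (k + 1)).attach,
          (1 - (1 / 2) * (z / ((Rseq c N R j.1 : ℝ) : ℂ)) ^ nseq N j.1)‖) ''
        Metric.sphere (0 : ℂ) (2 * Rseq c N R (k + 1)))
  decreasing_by
  · have := j.2; simp only [Finset.mem_Icc] at this; omega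
  · omega

/-- `F_k(z) = 1 - (1/2)(z/R_k)^{n_k}`. -/
def Fseq (c : ℂ) (N : ℕ) (R : ℝ) (k : ℕ) (z : ℂ) : ℂ :=
  1 - (1 / 2) * (z / ((Rseq c N R k : ℝ) : ℂ)) ^ nseq N k

/-- The partial product `f_k(z) = f₀^N(z) · ∏_{j=1}^k F_j(z)`. -/
def fseq (c : ℂ) (N : ℕ) (R : ℝ) (k : ℕ) (z : ℂ) : ℂ :=
  f0iter c N z * ∏ j ∈ Finset.Icc 1 k, Fseq c N R j z

/-- The infinite product `f(z) = f₀^N(z) · ∏_{k=1}^∞ F_k(z)`. -/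
def flim (c : ℂ) (N : ℕ) (R : ℝ) (z : ℂ) : ℂ :=
  f0iter c N z * ∏' k : ℕ, Fseq c N R (k + 1) z

/-- The standing assumption `1/2 ≤ |f₀^N(z)|/|z|^{2^N} ≤ 2` for `|z| ≥ R`. -/
def OneBound (c : ℂ) (N : ℕ) (R : ℝ) : Prop :=
  ∀ z : ℂ, R ≤ ‖z‖ →
    1 / 2 ≤ ‖f0iter c N z‖ / ‖z‖ ^ 2 ^ N ∧
    ‖f0iter c N z‖ / ‖z‖ ^ 2 ^ N ≤ 2

/-- `C₁ = R₁^{n₁}/2`, and for `k ≥ 2`,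
`C_k = (-1)^{k-1} 2^{-k} R_k^{n_k} ∏_{j=1}^{k-1} R_j^{-n_j}`. -/
def Cseq (c : ℂ) (N : ℕ) (R : ℝ) (k : ℕ) : ℝ :=
  (-1) ^ (k - 1) * Rseq c N R k ^ nseq N k /
    (2 ^ k * ∏ j ∈ Finset.Icc 1 (k - 1), Rseq c N R j ^ nseq N j)

/-! Evaluating `f_k` at the real point `2 R_k`, the factor `f₀^N` contributes at least `R_k^{2^N}`
and each `F_j` at least `(R_k / R_j)^{n_j}`; since `2^N + n_1 + ⋯ + n_k = n_{k+1}` this gives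
`R_{k+1} ≥ R_k^{n_{k+1}} / ∏_{j ≤ k} R_j^{n_j}`. By induction on `k` this yields
`∏_{j < k} R_j^{n_j} ≤ R_k^{n_{k-1}}` together with `2R ≤ R_1 ≤ ⋯ ≤ R_k`, and since
`n_k = 2 n_{k-1}`, `|C_k| = R_k^{n_k} / (2^k ∏_{j < k} R_j^{n_j}) ≥ R_k^{n_{k-1}} / 2^k`. -/

open Finset

lemma nseq_succ {N : ℕ} (hN : 1 ≤ N) (k : ℕ) : nseq N (k + 1) = 2 * nseq N k := by
  unfold nseq
  rw [← pow_succ']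
  congr 1
  omega

lemma two_le_nseq {N : ℕ} (hN : 2 ≤ N) (k : ℕ) : 2 ≤ nseq N k :=
  Nat.le_self_pow (by omega) 2

lemma add_five_le_nseq {N : ℕ} (hN : 5 ≤ N) (k : ℕ) : k + 5 ≤ nseq N k := by
  have := Nat.lt_two_pow_self (n := N + k - 1)
  unfold nseq
  omega

lemma two_pow_add_sum_nseq {N : ℕ} (hN : 1 ≤ N) (k : ℕ) :
    2 ^ N + ∑ j ∈ Icc 1 k, nseq N j = nseq N (k + 1) := by
  induction k with
  | zero => simp [nseq]
  | succ k ih =>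
    rw [sum_Icc_succ_top (by omega), ← add_assoc, ih, nseq_succ hN (k + 1)]
    ring

lemma pow_le_norm_one_sub_half_mul_pow {w : ℂ} (hw : 1 ≤ ‖w‖) {n : ℕ} (hn : 2 ≤ n) :
    ‖w‖ ^ n ≤ ‖1 - 1 / 2 * (2 * w) ^ n‖ := by
  have h1 : 1 ≤ ‖w‖ ^ n := one_le_pow₀ hw
  have h4 : (4 : ℝ) ≤ 2 ^ n := by
    calc (4 : ℝ) = 2 ^ 2 := by norm_num
      _ ≤ 2 ^ n := pow_le_pow_right₀ one_le_two hn
  calc ‖w‖ ^ n ≤ 1 / 2 * 2 ^ n * ‖w‖ ^ n - 1 := by nlinarith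
    _ = ‖1 / 2 * (2 * w) ^ n‖ - ‖(1 : ℂ)‖ := by simp [mul_pow, mul_assoc]
    _ ≤ ‖1 - 1 / 2 * (2 * w) ^ n‖ := by rw [norm_sub_rev]; exact norm_sub_norm_le _ _

lemma mul_le_pow_div_two_pow {r : ℝ} (hr : 2 ≤ r) {k n : ℕ} (hkn : k + 4 ≤ n) :
    8 * r ≤ r ^ n / 2 ^ k := by
  rw [le_div_iff₀ (by positivity)]
  calc 8 * r * 2 ^ k = 2 ^ (k + 3) * r := by ring
    _ ≤ r ^ (k + 3) * r := by gcongr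
    _ = r ^ (k + 4) := by ring
    _ ≤ r ^ n := pow_le_pow_right₀ (by linarith) hkn

section

variable {c : ℂ} {N : ℕ} {R : ℝ}

lemma Rseq_one : Rseq c N R 1 = 2 * R := by
  rw [Rseq]

lemma Rseq_add_two (k : ℕ) :
    Rseq c N R (k + 2) =
      sSup ((‖fseq c N R (k + 1) ·‖) '' Metric.sphere 0 (2 * Rseq c N R (k + 1))) := by
  rw [Rseq]
  simp only [fseq, Fseq]
  congr! 4 with z
  exact prod_attach (Icc 1 (k + 1)) fun j => 1 - 1 / 2 * (z / (Rseq c N R j : ℂ)) ^ nseq N j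

lemma continuous_fseq (k : ℕ) : Continuous (fseq c N R k) := by
  unfold fseq Fseq f0iter
  exact ((continuous_pow 2).add continuous_const).iterate N |>.mul
    (continuous_finsetProd _ fun j _ => by fun_prop)

lemma norm_fseq_le_Rseq_succ (k : ℕ) {z : ℂ} (hz : ‖z‖ = 2 * Rseq c N R (k + 1)) :
    ‖fseq c N R (k + 1) z‖ ≤ Rseq c N R (k + 2) := by
  rw [Rseq_add_two]
  exact le_csSup ((isCompact_sphere _ _).image (continuous_fseq _).norm).bddAbove
    ⟨z, by simpa using hz, rfl⟩

lemma OneBound.half_norm_pow_le (hone : OneBound c N R) {z : ℂ} (hz : R ≤ ‖z‖) :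
    (‖z‖ / 2) ^ 2 ^ N ≤ ‖f0iter c N z‖ := by
  rcases (norm_nonneg z).eq_or_lt with h0 | hpos
  · rw [← h0, zero_div, zero_pow (by positivity)]
    exact norm_nonneg _
  have hlow := (le_div_iff₀ (by positivity)).mp (hone z hz).1
  calc (‖z‖ / 2) ^ 2 ^ N = ‖z‖ ^ 2 ^ N / 2 ^ 2 ^ N := div_pow _ _ _
    _ ≤ ‖z‖ ^ 2 ^ N / 2 := by
        gcongr
        exact le_self_pow₀ one_le_two (by positivity)
    _ ≤ ‖f0iter c N z‖ := by linarith

lemma pow_le_norm_Fseq (hN : 2 ≤ N) {j : ℕ} (hRj : 0 < Rseq c N R j) {z : ℂ}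
    (hz : 2 * Rseq c N R j ≤ ‖z‖) :
    (‖z‖ / (2 * Rseq c N R j)) ^ nseq N j ≤ ‖Fseq c N R j z‖ := by
  have hw : z / (Rseq c N R j : ℂ) = 2 * (z / (2 * Rseq c N R j : ℝ)) := by
    push_cast
    field_simp
  have hnorm : ‖z / (2 * Rseq c N R j : ℝ)‖ = ‖z‖ / (2 * Rseq c N R j) := by
    rw [norm_div, Complex.norm_real, Real.norm_of_nonneg (by positivity)]
  rw [Fseq, hw, ← hnorm]
  exact pow_le_norm_one_sub_half_mul_pow (by rw [hnorm, one_le_div₀ (by positivity)]; exact hz)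
    (two_le_nseq hN j)

lemma pow_div_prod_le_norm_fseq (hN : 2 ≤ N) (hone : OneBound c N R) {k : ℕ} {r : ℝ}
    (hRj : ∀ j ∈ Icc 1 k, 0 < Rseq c N R j ∧ Rseq c N R j ≤ r) (hRr : R ≤ 2 * r) {z : ℂ}
    (hz : ‖z‖ = 2 * r) :
    r ^ nseq N (k + 1) / ∏ j ∈ Icc 1 k, Rseq c N R j ^ nseq N j ≤ ‖fseq c N R k z‖ := by
  have hf0 : r ^ 2 ^ N ≤ ‖f0iter c N z‖ := by
    have := hone.half_norm_pow_le (z := z) (by rw [hz]; exact hRr)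
    rwa [hz, mul_div_cancel_left₀ _ two_ne_zero] at this
  have hnonneg : ∀ j ∈ Icc 1 k, 0 ≤ (r / Rseq c N R j) ^ nseq N j := fun j hj =>
    pow_nonneg (div_nonneg ((hRj j hj).1.trans_le (hRj j hj).2).le (hRj j hj).1.le) _
  have hF : ∏ j ∈ Icc 1 k, (r / Rseq c N R j) ^ nseq N j ≤ ∏ j ∈ Icc 1 k, ‖Fseq c N R j z‖ := by
    refine prod_le_prod hnonneg fun j hj => ?_
    have := pow_le_norm_Fseq hN (hRj j hj).1 (z := z) (by rw [hz]; linarith [(hRj j hj).2])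
    rwa [hz, mul_div_mul_left _ _ two_ne_zero] at this
  calc r ^ nseq N (k + 1) / ∏ j ∈ Icc 1 k, Rseq c N R j ^ nseq N j
      = r ^ 2 ^ N * ∏ j ∈ Icc 1 k, (r / Rseq c N R j) ^ nseq N j := by
        rw [← two_pow_add_sum_nseq (by omega), pow_add, mul_div_assoc]
        simp only [div_pow, prod_div_distrib, prod_pow_eq_pow_sum]
    _ ≤ ‖f0iter c N z‖ * ∏ j ∈ Icc 1 k, ‖Fseq c N R j z‖ :=
        mul_le_mul hf0 hF (prod_nonneg hnonneg) (norm_nonneg _)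
    _ = ‖fseq c N R k z‖ := by rw [fseq, norm_mul, norm_prod]

lemma prod_Rseq_pow_pos {k : ℕ} (hpos : ∀ j ∈ Icc 1 (k + 1), 0 < Rseq c N R j) :
    0 < ∏ j ∈ Icc 1 k, Rseq c N R j ^ nseq N j :=
  prod_pos fun j hj => pow_pos (hpos j (Icc_subset_Icc_right (by omega) hj)) _

lemma pow_nseq_le_Rseq_add_two (hN : 2 ≤ N) (hone : OneBound c N R) (k : ℕ)
    (hbounds : ∀ j ∈ Icc 1 (k + 1), 0 < Rseq c N R j ∧ Rseq c N R j ≤ Rseq c N R (k + 1))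
    (hRr : R ≤ 2 * Rseq c N R (k + 1))
    (hprod : ∏ j ∈ Icc 1 k, Rseq c N R j ^ nseq N j ≤ Rseq c N R (k + 1) ^ nseq N k) :
    Rseq c N R (k + 1) ^ nseq N k ≤ Rseq c N R (k + 2) := by
  set r := Rseq c N R (k + 1)
  have hr : 0 < r := (hbounds (k + 1) (by simp)).1
  have hP := prod_Rseq_pow_pos (N := N) fun j hj => (hbounds j hj).1
  have hz : ‖((2 * r : ℝ) : ℂ)‖ = 2 * r := by
    rw [Complex.norm_real, Real.norm_of_nonneg (by positivity)]
  calc r ^ nseq N k = r ^ nseq N (k + 2) / (r ^ nseq N k * r ^ nseq N (k + 1)) := by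
        rw [eq_div_iff (by positivity), ← pow_add, ← pow_add, nseq_succ (by omega) (k + 1),
          nseq_succ (by omega) k]
        ring_nf
    _ ≤ r ^ nseq N (k + 2) / ((∏ j ∈ Icc 1 k, Rseq c N R j ^ nseq N j) * r ^ nseq N (k + 1)) := by
        gcongr
    _ = r ^ nseq N (k + 2) / ∏ j ∈ Icc 1 (k + 1), Rseq c N R j ^ nseq N j := by
        rw [prod_Icc_succ_top (by omega)]
    _ ≤ ‖fseq c N R (k + 1) ((2 * r : ℝ) : ℂ)‖ := pow_div_prod_le_norm_fseq hN hone hbounds hRr hz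
    _ ≤ Rseq c N R (k + 2) := norm_fseq_le_Rseq_succ k hz

lemma Rseq_growth (hN : 2 ≤ N) (hone : OneBound c N R) (hR : 1 / 2 ≤ R) (k : ℕ) :
    (∀ j ∈ Icc 1 (k + 1), 2 * R ≤ Rseq c N R j ∧ Rseq c N R j ≤ Rseq c N R (k + 1)) ∧
      ∏ j ∈ Icc 1 k, Rseq c N R j ^ nseq N j ≤ Rseq c N R (k + 1) ^ nseq N k := by
  induction k with
  | zero =>
    simp only [zero_add, Icc_self, mem_singleton, forall_eq, Rseq_one, le_refl, and_self,
      true_and, Icc_eq_empty_of_lt zero_lt_one, prod_empty]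
    exact one_le_pow₀ (by linarith)
  | succ k ih =>
    obtain ⟨hbounds, hprod⟩ := ih
    set r := Rseq c N R (k + 1)
    have hRr : 2 * R ≤ r := (hbounds (k + 1) (by simp)).1
    have hr : 1 ≤ r := by linarith
    have hstep : r ^ nseq N k ≤ Rseq c N R (k + 2) :=
      pow_nseq_le_Rseq_add_two hN hone k
        (fun j hj => ⟨by linarith [(hbounds j hj).1], (hbounds j hj).2⟩) (by linarith) hprod
    have hr_le : r ≤ Rseq c N R (k + 2) :=
      (le_self_pow₀ hr (by have := two_le_nseq hN k; omega)).trans hstep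
    refine ⟨fun j hj => ?_, ?_⟩
    · rcases (mem_Icc.mp hj).2.lt_or_eq with hlt | rfl
      · have := hbounds j (mem_Icc.mpr ⟨(mem_Icc.mp hj).1, by omega⟩)
        exact ⟨this.1, this.2.trans hr_le⟩
      · exact ⟨hRr.trans hr_le, le_rfl⟩
    · calc ∏ j ∈ Icc 1 (k + 1), Rseq c N R j ^ nseq N j
          = (∏ j ∈ Icc 1 k, Rseq c N R j ^ nseq N j) * r ^ nseq N (k + 1) :=
            prod_Icc_succ_top (by omega) _
        _ ≤ r ^ nseq N k * r ^ nseq N (k + 1) := by gcongr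
        _ = r ^ (nseq N k + nseq N (k + 1)) := (pow_add _ _ _).symm
        _ ≤ r ^ (nseq N k * nseq N (k + 1)) :=
            pow_le_pow_right₀ hr (Nat.add_le_mul (two_le_nseq hN k) (two_le_nseq hN _))
        _ = (r ^ nseq N k) ^ nseq N (k + 1) := pow_mul _ _ _
        _ ≤ Rseq c N R (k + 2) ^ nseq N (k + 1) := by gcongr

lemma abs_Cseq_succ {k : ℕ} (hpos : ∀ j ∈ Icc 1 (k + 1), 0 < Rseq c N R j) :
    |Cseq c N R (k + 1)| =
      Rseq c N R (k + 1) ^ nseq N (k + 1) /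
        (2 ^ (k + 1) * ∏ j ∈ Icc 1 k, Rseq c N R j ^ nseq N j) := by
  have hP := prod_Rseq_pow_pos (N := N) hpos
  rw [Cseq, Nat.add_sub_cancel, abs_div, abs_mul, abs_pow, abs_neg, abs_one, one_pow, one_mul,
    abs_of_pos (pow_pos (hpos (k + 1) (by simp)) _), abs_of_pos (by positivity)]

lemma Rseq_pow_div_le_abs_Cseq (hN : 1 ≤ N) {k : ℕ}
    (hpos : ∀ j ∈ Icc 1 (k + 1), 0 < Rseq c N R j)
    (hprod : ∏ j ∈ Icc 1 k, Rseq c N R j ^ nseq N j ≤ Rseq c N R (k + 1) ^ nseq N k) :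
    Rseq c N R (k + 1) ^ nseq N k / 2 ^ (k + 1) ≤ |Cseq c N R (k + 1)| := by
  have hr : 0 < Rseq c N R (k + 1) := hpos (k + 1) (by simp)
  have hP := prod_Rseq_pow_pos (N := N) hpos
  set a := Rseq c N R (k + 1) ^ nseq N k
  rw [abs_Cseq_succ hpos, nseq_succ hN, two_mul, pow_add (Rseq c N R (k + 1))]
  calc a / 2 ^ (k + 1) = a / 2 ^ (k + 1) * 1 := (mul_one _).symm
    _ ≤ a / 2 ^ (k + 1) * (a / ∏ j ∈ Icc 1 k, Rseq c N R j ^ nseq N j) := by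
        gcongr
        exact (one_le_div hP).mpr hprod
    _ = a * a / (2 ^ (k + 1) * ∏ j ∈ Icc 1 k, Rseq c N R j ^ nseq N j) := by
        rw [mul_div_mul_comm]

end

theorem stmt7_general (c : ℂ) (N : ℕ) (hN : 10 ≤ N) (R : ℝ)
    (hone : OneBound c N R) (hR8 : 8 < R) :
    (∀ k : ℕ, 2 ≤ k →
      Rseq c N R k ^ nseq N (k - 1) / 2 ^ k ≤ |Cseq c N R k| ∧
      8 * Rseq c N R k ≤ Rseq c N R k ^ nseq N (k - 1) / 2 ^ k) ∧
    (|Cseq c N R 1| = Rseq c N R 1 ^ nseq N 1 / 2 ∧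
      8 * Rseq c N R 1 ≤ Rseq c N R 1 ^ nseq N 1 / 2) := by
  have hgrowth := Rseq_growth (c := c) (by omega) hone (by linarith)
  have hpos : ∀ k, ∀ j ∈ Icc 1 (k + 1), 0 < Rseq c N R j := fun k j hj => by
    linarith [((hgrowth k).1 j hj).1]
  have htwo : ∀ k, 2 ≤ Rseq c N R (k + 1) := fun k => by
    linarith [((hgrowth k).1 (k + 1) (by simp)).1]
  refine ⟨fun k hk => ?_, ?_, ?_⟩
  · obtain ⟨m, rfl⟩ : ∃ m, k = m + 1 := ⟨k - 1, by omega⟩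
    rw [Nat.add_sub_cancel]
    exact ⟨Rseq_pow_div_le_abs_Cseq (by omega) (hpos m) (hgrowth m).2,
      mul_le_pow_div_two_pow (htwo m) (by have := add_five_le_nseq (N := N) (by omega) m; omega)⟩
  · simpa using abs_Cseq_succ (hpos 0)
  · simpa using mul_le_pow_div_two_pow (k := 1) (htwo 0)
      (by have := add_five_le_nseq (N := N) (by omega) 1; omega)

/-- If additionally `R > 8`, then for `k ≥ 2`, `|C_k| ≥ R_k^{n_{k-1}}/2^k ≥ 8 R_k`,
and `|C₁| = R₁^{n₁}/2 ≥ 8 R₁`. -/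
theorem stmt7 (c : ℂ) (N : ℕ) (hN : 10 ≤ N) (R : ℝ) (hR : 0 < R)
    (hone : OneBound c N R) (hR8 : 8 < R) :
    (∀ k : ℕ, 2 ≤ k →
      Rseq c N R k ^ nseq N (k - 1) / 2 ^ k ≤ |Cseq c N R k| ∧
      8 * Rseq c N R k ≤ Rseq c N R k ^ nseq N (k - 1) / 2 ^ k) ∧
    (|Cseq c N R 1| = Rseq c N R 1 ^ nseq N 1 / 2 ∧
      8 * Rseq c N R 1 ≤ Rseq c N R 1 ^ nseq N 1 / 2) :=
  stmt7_general c N hN R hone hR8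

end
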